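/- Fix 1 ≤ k < n and a real λ > 0. The set N_k = { l : k < l ≤ n, N(k,l) ≤ λ } is an interval of integers: if l_1, l_3 ∈ N_k and l_1 ≤ l_2 ≤ l_3, then l_2 ∈ N_k. -/

import Mathlib

/-!
Lengthening the shortcut `(p_k, p_l)` to `(p_k, p_{l'})`, `l ≤ l'`, cannot shorten the distance
between two vertices before `p_l`: by the triangle inequality the new shortcut is no shorter than
the old one followed by the path from `p_l` to `p_{l'}`. Hence `S(k,l₂) ≤ S(k,l₃)`. Symmetrically,
it cannot lengthen the distance from a vertex before `p_l` to a vertex after `p_{l'}`, which gives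
`U(k,l₂) ≤ U(k,l₁)` and bounds the terms of `E(k,l₂)` with `x ≤ l₁` by `E(k,l₁)`. A vertex
`l₁ < x ≤ l₂` is no farther from `p_n` along the path than `p_{l₁}`, whose distance to `p_n` is a
term of `E(k,l₁)`.
-/

noncomputable section

variable {X : Type*} [MetricSpace X]

/-- Path distance between vertices `i` and `j` of the path `p₁, …, pₙ`:
the sum of the edge weights `d(p_t, p_{t+1})` for `min i j ≤ t < max i j`. -/
def pathDist (p : ℕ → X) (i j : ℕ) : ℝ :=
  ∑ t ∈ Finset.Ico (min i j) (max i j), dist (p t) (p (t + 1))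

/-- Shortest-path distance between vertices `x` and `y` in the unicyclic graph
`P̄[k,l]` obtained by adding the shortcut `(p_k, p_l)` of weight `d(p_k, p_l)`. -/
def pbar (p : ℕ → X) (k l x y : ℕ) : ℝ :=
  min (pathDist p x y)
    (min (pathDist p x k + dist (p k) (p l) + pathDist p l y)
         (pathDist p x l + dist (p k) (p l) + pathDist p k y))

/-- The length `|C[k,l]|` of the cycle `C[k,l]`. -/
def cycleLen (p : ℕ → X) (k l : ℕ) : ℝ :=
  pathDist p k l + dist (p k) (p l)

/-- The cycle distance `c_{k,l}(x,y)` for `k ≤ x, y ≤ l`. -/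
def cycDist (p : ℕ → X) (k l x y : ℕ) : ℝ :=
  min (pathDist p x y) (cycleLen p k l - pathDist p x y)

/-- `S(k,l) = max_{k ≤ x ≤ l} p̄_{k,l}(1,x)`. -/
def Sfun (p : ℕ → X) (k l : ℕ) : ℝ :=
  sSup ((fun x => pbar p k l 1 x) '' Set.Icc k l)

/-- `E(k,l) = max_{k ≤ x ≤ l} p̄_{k,l}(x,n)`. -/
def Efun (p : ℕ → X) (n k l : ℕ) : ℝ :=
  sSup ((fun x => pbar p k l x n) '' Set.Icc k l)

/-- `U(k,l) = p̄_{k,l}(1,n)`. -/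
def Ufun (p : ℕ → X) (n k l : ℕ) : ℝ :=
  pbar p k l 1 n

/-- `O(k,l) = max_{k ≤ x < y ≤ l} c_{k,l}(x,y)`. -/
def Ofun (p : ℕ → X) (k l : ℕ) : ℝ :=
  sSup {r | ∃ x y : ℕ, k ≤ x ∧ x < y ∧ y ≤ l ∧ r = cycDist p k l x y}

/-- `N(k,l) = max (S(k,l), E(k,l), U(k,l))`. -/
def Nfun (p : ℕ → X) (n k l : ℕ) : ℝ :=
  max (Sfun p k l) (max (Efun p n k l) (Ufun p n k l))

/-- `M(k,l) = max_{1 ≤ x < y ≤ n} p̄_{k,l}(x,y)`, the diameter of `P̄[k,l]`. -/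
def Mfun (p : ℕ → X) (n k l : ℕ) : ℝ :=
  sSup {r | ∃ x y : ℕ, 1 ≤ x ∧ x < y ∧ y ≤ n ∧ r = pbar p k l x y}

section

variable (p : ℕ → X)

lemma pathDist_nonneg (i j : ℕ) : 0 ≤ pathDist p i j :=
  Finset.sum_nonneg fun _ _ => dist_nonneg

lemma pathDist_comm (i j : ℕ) : pathDist p i j = pathDist p j i := by
  rw [pathDist, pathDist, min_comm, max_comm]

lemma pathDist_of_le {i j : ℕ} (h : i ≤ j) :
    pathDist p i j = ∑ t ∈ Finset.Ico i j, dist (p t) (p (t + 1)) := by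
  rw [pathDist, min_eq_left h, max_eq_right h]

lemma pathDist_add_pathDist {i j k : ℕ} (hij : i ≤ j) (hjk : j ≤ k) :
    pathDist p i j + pathDist p j k = pathDist p i k := by
  rw [pathDist_of_le p hij, pathDist_of_le p hjk, pathDist_of_le p (hij.trans hjk),
    Finset.sum_Ico_consecutive _ hij hjk]

lemma dist_le_pathDist (i j : ℕ) : dist (p i) (p j) ≤ pathDist p i j := by
  rcases le_total i j with h | h
  · exact (pathDist_of_le p h).symm ▸ dist_le_Ico_sum_dist p h
  · rw [dist_comm, pathDist_comm]
    exact (pathDist_of_le p h).symm ▸ dist_le_Ico_sum_dist p h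

lemma pbar_le_pathDist (k l x y : ℕ) : pbar p k l x y ≤ pathDist p x y :=
  min_le_left _ _

lemma pbar_mono_of_le_shortcut_end {k l l' a x : ℕ} (ha : a ≤ l) (hx : x ≤ l) (hl : l ≤ l') :
    pbar p k l a x ≤ pbar p k l' a x := by
  have hshort : dist (p k) (p l) ≤ dist (p k) (p l') + pathDist p l l' := by
    linarith [dist_triangle (p k) (p l') (p l), dist_comm (p l') (p l), dist_le_pathDist p l l']
  have hx' : pathDist p x l + pathDist p l l' = pathDist p x l' := pathDist_add_pathDist p hx hl
  have ha' : pathDist p a l + pathDist p l l' = pathDist p a l' := pathDist_add_pathDist p ha hl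
  unfold pbar
  rw [pathDist_comm p l x, pathDist_comm p l' x]
  refine le_min (min_le_left _ _) (le_min ?_ ?_)
  · exact ((min_le_right _ _).trans (min_le_left _ _)).trans (by linarith)
  · exact ((min_le_right _ _).trans (min_le_right _ _)).trans (by linarith)

lemma pbar_anti_of_shortcut_end_between {k l l' x y : ℕ} (hk : k ≤ l) (hx : x ≤ l) (hl : l ≤ l')
    (hy : l' ≤ y) : pbar p k l' x y ≤ pbar p k l x y := by
  have hshort : dist (p k) (p l') ≤ dist (p k) (p l) + pathDist p l l' := by
    linarith [dist_triangle (p k) (p l) (p l'), dist_le_pathDist p l l']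
  have hly : pathDist p l l' + pathDist p l' y = pathDist p l y := pathDist_add_pathDist p hl hy
  have hxy : pathDist p x l + pathDist p l y = pathDist p x y :=
    pathDist_add_pathDist p hx (hl.trans hy)
  have hky : pathDist p k l + pathDist p l y = pathDist p k y :=
    pathDist_add_pathDist p hk (hl.trans hy)
  have := pathDist_nonneg p k l
  have := dist_nonneg (x := p k) (y := p l)
  unfold pbar
  refine le_min (min_le_left _ _) (le_min ?_ ?_)
  · exact ((min_le_right _ _).trans (min_le_left _ _)).trans (by linarith)
  · exact (min_le_left _ _).trans (by linarith)

lemma pbar_eq_pathDist_of_le {k l x y : ℕ} (hk : k ≤ l) (hx : l ≤ x) (hy : x ≤ y) :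
    pbar p k l x y = pathDist p x y := by
  have hly : pathDist p l x + pathDist p x y = pathDist p l y := pathDist_add_pathDist p hx hy
  have hky : pathDist p k x + pathDist p x y = pathDist p k y :=
    pathDist_add_pathDist p (hk.trans hx) hy
  have := pathDist_nonneg p x k
  have := pathDist_nonneg p x l
  have := pathDist_nonneg p k x
  have := pathDist_nonneg p l x
  have := dist_nonneg (x := p k) (y := p l)
  exact min_eq_left (le_min (by linarith) (by linarith))

lemma sSup_image_Icc_le_iff (f : ℕ → ℝ) {a b : ℕ} (hab : a ≤ b) {c : ℝ} :
    sSup (f '' Set.Icc a b) ≤ c ↔ ∀ x ∈ Set.Icc a b, f x ≤ c := by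
  rw [csSup_le_iff ((Set.finite_Icc a b).image f).bddAbove
    ((Set.nonempty_Icc.2 hab).image f), Set.forall_mem_image]

lemma Nfun_le_iff {n k l : ℕ} (hkl : k ≤ l) {c : ℝ} :
    Nfun p n k l ≤ c ↔ (∀ x ∈ Set.Icc k l, pbar p k l 1 x ≤ c) ∧
      (∀ x ∈ Set.Icc k l, pbar p k l x n ≤ c) ∧ pbar p k l 1 n ≤ c := by
  simp only [Nfun, Sfun, Efun, Ufun, max_le_iff, sSup_image_Icc_le_iff _ hkl]

end

theorem Nk_is_interval_general {X : Type*} [MetricSpace X]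
    (n : ℕ) (p : ℕ → X)
    (k : ℕ) (lam : ℝ)
    (l₁ l₂ l₃ : ℕ)
    (h₁ : l₁ ∈ {l : ℕ | k < l ∧ l ≤ n ∧ Nfun p n k l ≤ lam})
    (h₃ : l₃ ∈ {l : ℕ | k < l ∧ l ≤ n ∧ Nfun p n k l ≤ lam})
    (h₁₂ : l₁ ≤ l₂) (h₂₃ : l₂ ≤ l₃) :
    l₂ ∈ {l : ℕ | k < l ∧ l ≤ n ∧ Nfun p n k l ≤ lam} := by
  obtain ⟨hkl₁, hl₁n, hN₁⟩ := h₁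
  obtain ⟨hkl₃, hl₃n, hN₃⟩ := h₃
  have hkl₂ : k < l₂ := hkl₁.trans_le h₁₂
  have hl₂n : l₂ ≤ n := h₂₃.trans hl₃n
  obtain ⟨-, hE₁, hU₁⟩ := (Nfun_le_iff p hkl₁.le).1 hN₁
  obtain ⟨hS₃, -, -⟩ := (Nfun_le_iff p hkl₃.le).1 hN₃
  refine ⟨hkl₂, hl₂n, (Nfun_le_iff p hkl₂.le).2 ⟨fun x hx => ?_, fun x hx => ?_, ?_⟩⟩
  · exact (pbar_mono_of_le_shortcut_end p (by omega) hx.2 h₂₃).trans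
      (hS₃ x ⟨hx.1, hx.2.trans h₂₃⟩)
  · rcases le_total x l₁ with hxl₁ | hl₁x
    · exact (pbar_anti_of_shortcut_end_between p hkl₁.le hxl₁ h₁₂ hl₂n).trans (hE₁ x ⟨hx.1, hxl₁⟩)
    · calc pbar p k l₂ x n ≤ pathDist p x n := pbar_le_pathDist p k l₂ x n
        _ ≤ pathDist p l₁ n := by
          linarith [pathDist_add_pathDist p hl₁x (hx.2.trans hl₂n), pathDist_nonneg p l₁ x]
        _ = pbar p k l₁ l₁ n := (pbar_eq_pathDist_of_le p hkl₁.le le_rfl hl₁n).symm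
        _ ≤ lam := hE₁ l₁ ⟨hkl₁.le, le_rfl⟩
  · exact (pbar_anti_of_shortcut_end_between p hkl₁.le (by omega) h₁₂ hl₂n).trans hU₁

/-- Fix `1 ≤ k < n` and `λ > 0`. The set
`N_k = { l : k < l ≤ n, N(k,l) ≤ λ }` is an interval of integers: if
`l₁, l₃ ∈ N_k` and `l₁ ≤ l₂ ≤ l₃`, then `l₂ ∈ N_k`. -/
theorem Nk_is_interval {X : Type*} [MetricSpace X]
    (n : ℕ) (hn : 2 ≤ n) (p : ℕ → X)
    (k : ℕ) (hk : 1 ≤ k) (hkn : k < n) (lam : ℝ) (hlam : 0 < lam)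
    (l₁ l₂ l₃ : ℕ)
    (h₁ : l₁ ∈ {l : ℕ | k < l ∧ l ≤ n ∧ Nfun p n k l ≤ lam})
    (h₃ : l₃ ∈ {l : ℕ | k < l ∧ l ≤ n ∧ Nfun p n k l ≤ lam})
    (h₁₂ : l₁ ≤ l₂) (h₂₃ : l₂ ≤ l₃) :
    l₂ ∈ {l : ℕ | k < l ∧ l ≤ n ∧ Nfun p n k l ≤ lam} :=
  Nk_is_interval_general n p k lam l₁ l₂ l₃ h₁ h₃ h₁₂ h₂₃
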